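/- arXiv:2503.13154 — 2 statements merged into one kernel-verified Lean document; each statement's English description precedes it below -/
import Mathlib

section
/- Competitive exclusion for antisymmetric replicator dynamics: suppose w : [0,∞) → ℝ^n solves w_i' = w_i Σ_j a_{ij} w_j with antisymmetric A, nonnegative components summing to 1 for all t, and there exists i⋆ with w_{i⋆}(0) > 0 and a_{i⋆ j} ≥ δ > 0 for all j ≠ i⋆. Then w_{i⋆}(t) → 1 and w_j(t) → 0 for all j ≠ i⋆ as t → ∞. -/
open Filter Set

private lemma aux_antitone (h h' : ℝ → ℝ)
    (hd : ∀ t ∈ Set.Ici (0:ℝ), HasDerivAt h (h' t) t)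
    (hle : ∀ t ∈ Set.Ici (0:ℝ), h' t ≤ 0) : AntitoneOn h (Set.Ici 0) := by
  apply antitoneOn_of_deriv_nonpos (convex_Ici 0)
  · intro t ht; exact (hd t ht).continuousAt.continuousWithinAt
  · intro t ht; rw [interior_Ici] at ht
    exact ((hd t (Set.mem_Ici.mpr (le_of_lt ht))).differentiableAt).differentiableWithinAt
  · intro t ht; rw [interior_Ici] at ht
    rw [(hd t (Set.mem_Ici.mpr (le_of_lt ht))).deriv]; exact hle t (Set.mem_Ici.mpr (le_of_lt ht))

private lemma aux_monotone (h h' : ℝ → ℝ)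
    (hd : ∀ t ∈ Set.Ici (0:ℝ), HasDerivAt h (h' t) t)
    (hle : ∀ t ∈ Set.Ici (0:ℝ), 0 ≤ h' t) : MonotoneOn h (Set.Ici 0) := by
  apply monotoneOn_of_deriv_nonneg (convex_Ici 0)
  · intro t ht; exact (hd t ht).continuousAt.continuousWithinAt
  · intro t ht; rw [interior_Ici] at ht
    exact ((hd t (Set.mem_Ici.mpr (le_of_lt ht))).differentiableAt).differentiableWithinAt
  · intro t ht; rw [interior_Ici] at ht
    rw [(hd t (Set.mem_Ici.mpr (le_of_lt ht))).deriv]; exact hle t (Set.mem_Ici.mpr (le_of_lt ht))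


/-- Competitive exclusion for antisymmetric replicator dynamics: if some trait `i⋆`
is initially present and `a_{i⋆ j} ≥ δ > 0` for all `j ≠ i⋆`, then `w_{i⋆}(t) → 1`
and `w_j(t) → 0` for all `j ≠ i⋆` as `t → ∞`. -/
theorem replicator_competitive_exclusion (n : ℕ) (hn : 2 ≤ n)
    (A : Fin n → Fin n → ℝ) (hA : ∀ i j, A i j = - A j i)
    (δ : ℝ) (hδ : 0 < δ)
    (w : ℝ → Fin n → ℝ)
    (hode : ∀ i, ∀ t ≥ (0:ℝ),
      HasDerivAt (fun s => w s i) (w t i * ∑ j, A i j * w t j) t)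
    (hnonneg : ∀ i, ∀ t ≥ (0:ℝ), 0 ≤ w t i)
    (hsum : ∀ t ≥ (0:ℝ), ∑ i, w t i = 1)
    (istar : Fin n) (hinit : 0 < w 0 istar)
    (hdom : ∀ j, j ≠ istar → δ ≤ A istar j) :
    Tendsto (fun t => w t istar) atTop (nhds 1) ∧
      ∀ j, j ≠ istar → Tendsto (fun t => w t j) atTop (nhds 0) := by
  set c := w 0 istar with hc
  set k := c * δ with hk
  -- A istar istar = 0
  have hA0 : A istar istar = 0 := by have := hA istar istar; linarith
  -- w t istar ≤ 1
  have hle1 : ∀ t ≥ (0:ℝ), w t istar ≤ 1 := by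
    intro t ht
    have h1 := Finset.single_le_sum (f := fun j => w t j)
      (fun j _ => hnonneg j t ht) (Finset.mem_univ istar)
    rw [hsum t ht] at h1; exact h1
  -- sum over erase
  have herase : ∀ t ≥ (0:ℝ),
      ∑ j ∈ Finset.univ.erase istar, w t j = 1 - w t istar := by
    intro t ht
    have := Finset.add_sum_erase Finset.univ (fun j => w t j) (Finset.mem_univ istar)
    rw [hsum t ht] at this; linarith
  -- the interaction sum lower bound
  have hS : ∀ t ≥ (0:ℝ), δ * (1 - w t istar) ≤ ∑ j, A istar j * w t j := by
    intro t ht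
    have h1 : ∑ j, A istar j * w t j
        = ∑ j ∈ Finset.univ.erase istar, A istar j * w t j := by
      rw [← Finset.add_sum_erase Finset.univ _ (Finset.mem_univ istar), hA0, zero_mul,
        zero_add]
    have h2 : ∑ j ∈ Finset.univ.erase istar, δ * w t j
        ≤ ∑ j ∈ Finset.univ.erase istar, A istar j * w t j := by
      apply Finset.sum_le_sum
      intro j hj
      exact mul_le_mul_of_nonneg_right (hdom j (Finset.ne_of_mem_erase hj)) (hnonneg j t ht)
    rw [h1, ← Finset.mul_sum] at *
    rw [herase t ht] at h2
    linarith
  have hSnn : ∀ t ≥ (0:ℝ), 0 ≤ ∑ j, A istar j * w t j := by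
    intro t ht
    have := hS t ht
    have := hle1 t ht
    nlinarith
  -- monotonicity of w · istar
  have hmono : MonotoneOn (fun t => w t istar) (Set.Ici 0) := by
    apply aux_monotone _ (fun t => w t istar * ∑ j, A istar j * w t j)
      (fun t ht => hode istar t ht)
    intro t ht
    exact mul_nonneg (hnonneg istar t ht) (hSnn t ht)
  have hge : ∀ t ≥ (0:ℝ), c ≤ w t istar := by
    intro t ht
    exact hmono (le_refl (0:ℝ)) ht ht
  have hknn : 0 < k := mul_pos hinit hδ
  -- Gronwall function
  have hE : AntitoneOn (fun t => (1 - w t istar) * Real.exp (k * t)) (Set.Ici 0) := by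
    apply aux_antitone _ (fun t =>
      (-(w t istar * ∑ j, A istar j * w t j)) * Real.exp (k * t)
        + (1 - w t istar) * (Real.exp (k * t) * k))
    · intro t ht
      have hd1 : HasDerivAt (fun s => 1 - w s istar)
          (-(w t istar * ∑ j, A istar j * w t j)) t := by
        exact ((hasDerivAt_const t (1:ℝ)).sub (hode istar t ht)).congr_deriv (by simp)
      have hd2 : HasDerivAt (fun s => Real.exp (k * s)) (Real.exp (k * t) * k) t := by
        have := (Real.hasDerivAt_exp (k * t)).comp t ((hasDerivAt_id t).const_mul k)
        exact this.congr_deriv (by simp)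
      exact hd1.mul hd2
    · intro t ht
      have hS' := hS t ht
      have hge' := hge t ht
      have hle1' := hle1 t ht
      have hwnn := hnonneg istar t ht
      have hexp := Real.exp_pos (k * t)
      -- c*δ*(1-f) ≤ f * S
      have step1 : w t istar * (δ * (1 - w t istar))
          ≤ w t istar * ∑ j, A istar j * w t j :=
        mul_le_mul_of_nonneg_left hS' hwnn
      have step2 : c * (δ * (1 - w t istar)) ≤ w t istar * (δ * (1 - w t istar)) := by
        apply mul_le_mul_of_nonneg_right hge'
        nlinarith
      have key : k * (1 - w t istar) ≤ w t istar * ∑ j, A istar j * w t j := by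
        rw [hk]; nlinarith
      nlinarith
  -- exponential bound on 1 - w t istar
  have hbound : ∀ t ≥ (0:ℝ), 1 - w t istar ≤ (1 - c) * Real.exp (-(k * t)) := by
    intro t ht
    have h1 := hE (le_refl (0:ℝ)) ht ht
    simp only [mul_zero, Real.exp_zero, mul_one] at h1
    have h2 : Real.exp (-(k * t)) * Real.exp (k * t) = 1 := by
      rw [← Real.exp_add]; simp
    have hexp := Real.exp_pos (k * t)
    have hexp2 := Real.exp_pos (-(k * t))
    nlinarith
  -- RHS tends to 0
  have hrhs : Tendsto (fun t => (1 - c) * Real.exp (-(k * t))) atTop (nhds 0) := by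
    have h1 : Tendsto (fun t : ℝ => k * t) atTop atTop :=
      Tendsto.const_mul_atTop hknn tendsto_id
    have h2 : Tendsto (fun t : ℝ => -(k * t)) atTop atBot :=
      tendsto_neg_atTop_atBot.comp h1
    have h3 : Tendsto (fun t : ℝ => Real.exp (-(k * t))) atTop (nhds 0) :=
      Real.tendsto_exp_atBot.comp h2
    simpa using h3.const_mul (1 - c)
  have hg0 : Tendsto (fun t => 1 - w t istar) atTop (nhds 0) := by
    apply squeeze_zero' ?_ ?_ hrhs
    · filter_upwards [eventually_ge_atTop (0:ℝ)] with t ht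
      linarith [hle1 t ht]
    · filter_upwards [eventually_ge_atTop (0:ℝ)] with t ht
      exact hbound t ht
  constructor
  · have := tendsto_const_nhds (x := (1:ℝ)) (f := atTop).sub hg0
    have h := (tendsto_const_nhds (x := (1:ℝ)) (α := ℝ) (f := atTop)).sub hg0
    simpa using h
  · intro j hj
    apply squeeze_zero' ?_ ?_ hg0
    · filter_upwards [eventually_ge_atTop (0:ℝ)] with t ht
      exact hnonneg j t ht
    · filter_upwards [eventually_ge_atTop (0:ℝ)] with t ht
      have h1 := Finset.single_le_sum (f := fun i => w t i)
        (fun i _ => hnonneg i t ht) (Finset.mem_erase.mpr ⟨hj, Finset.mem_univ j⟩)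
      rw [herase t ht] at h1
      exact h1
end

section
/- The gradient in the second variable of the fixation probability at coincidence satisfies ∇₂α(r,x,x) = ((N−1)/(2N)) ∇₂Fit(r,x,x), where Fit(r,y,x) = log(c(r,x,y)/c(r,y,x)) and α(r,y,x) = (1 + Σ_{k=1}^{N−1}(c(r,y,x)/c(r,x,y))^k)^{−1}. -/
open Finset

/-- The gradient (Fréchet derivative) in the second variable of the fixation
probability at coincidence satisfies
`∇₂α(r,x,x) = ((N−1)/(2N)) ∇₂Fit(r,x,x)`, where
`Fit(r,y,x) = log(c(r,x,y)/c(r,y,x))` and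
`α(r,y,x) = (1 + Σ_{k=1}^{N−1}(c(r,y,x)/c(r,x,y))^k)⁻¹`. -/
theorem gradient_fixation_probability (d N : ℕ) (hN : 1 ≤ N)
    (c : ℝ → EuclideanSpace ℝ (Fin d) → EuclideanSpace ℝ (Fin d) → ℝ)
    (hpos : ∀ r x y, 0 < c r x y)
    (hC1 : ∀ r, ContDiff ℝ 1 (fun p : EuclideanSpace ℝ (Fin d) × EuclideanSpace ℝ (Fin d) =>
      c r p.1 p.2)) :
    ∀ (r : ℝ) (x : EuclideanSpace ℝ (Fin d)),
      fderiv ℝ (fun y => (1 + ∑ k ∈ Finset.Icc 1 (N - 1), (c r y x / c r x y) ^ k)⁻¹) x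
        = (((N : ℝ) - 1) / (2 * N)) •
          fderiv ℝ (fun y => Real.log (c r x y / c r y x)) x := by
  intro r x
  have hdiff : Differentiable ℝ
      (fun p : EuclideanSpace ℝ (Fin d) × EuclideanSpace ℝ (Fin d) => c r p.1 p.2) :=
    (hC1 r).differentiable one_ne_zero
  have hyx : Differentiable ℝ (fun y : EuclideanSpace ℝ (Fin d) => (y, x)) :=
    differentiable_id.prodMk (differentiable_const x)
  have hxy : Differentiable ℝ (fun y : EuclideanSpace ℝ (Fin d) => (x, y)) :=
    (differentiable_const x).prodMk differentiable_id
  have hu : DifferentiableAt ℝ (fun y => c r y x) x := (hdiff.comp hyx) x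
  have hv : DifferentiableAt ℝ (fun y => c r x y) x := (hdiff.comp hxy) x
  set U := fderiv ℝ (fun y => c r y x) x with hUdef
  set V := fderiv ℝ (fun y => c r x y) x with hVdef
  have hU : HasFDerivAt (fun y => c r y x) U x := hu.hasFDerivAt
  have hV : HasFDerivAt (fun y => c r x y) V x := hv.hasFDerivAt
  set a := c r x x with hadef
  have ha : (0:ℝ) < a := hpos r x x
  have hane : a ≠ 0 := ha.ne'
  have hNR : (0:ℝ) < N := by exact_mod_cast hN
  -- inner quotient g(y) = c r y x / c r x y
  have hVinv : HasFDerivAt (fun y => (c r x y)⁻¹) ((-(a^2)⁻¹) • V) x :=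
    (hasDerivAt_inv hane).comp_hasFDerivAt_of_eq x hV rfl
  have hUinv : HasFDerivAt (fun y => (c r y x)⁻¹) ((-(a^2)⁻¹) • U) x :=
    (hasDerivAt_inv hane).comp_hasFDerivAt_of_eq x hU rfl
  have hg : HasFDerivAt (fun y => c r y x / c r x y)
      (a • ((-(a^2)⁻¹) • V) + a⁻¹ • U) x := by
    simp only [div_eq_mul_inv]
    exact hU.mul hVinv
  set Dg := a • ((-(a^2)⁻¹) • V) + a⁻¹ • U with hDg
  have hgx : a / a = 1 := div_self hane
  -- sum
  have hpow : ∀ k ∈ Finset.Icc 1 (N-1), HasFDerivAt (fun y => (c r y x / c r x y) ^ k)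
      (((k:ℝ) * (a/a) ^ (k-1)) • Dg) x := fun k _ =>
    (hasDerivAt_pow k (a/a)).comp_hasFDerivAt_of_eq x hg rfl
  have hsum : HasFDerivAt (fun y => 1 + ∑ k ∈ Finset.Icc 1 (N-1), (c r y x / c r x y) ^ k)
      (∑ k ∈ Finset.Icc 1 (N-1), ((k:ℝ) * (a/a) ^ (k-1)) • Dg) x :=
    (HasFDerivAt.fun_sum hpow).const_add 1
  have hFx : 1 + ∑ k ∈ Finset.Icc 1 (N-1), (a / a) ^ k = (N:ℝ) := by
    rw [hgx]
    simp only [one_pow, Finset.sum_const, nsmul_eq_mul, mul_one, Nat.card_Icc]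
    have : N - 1 + 1 - 1 = N - 1 := by omega
    rw [this, Nat.cast_sub hN]
    push_cast; ring
  have hFne : 1 + ∑ k ∈ Finset.Icc 1 (N-1), (a / a) ^ k ≠ 0 := by
    rw [hFx]; exact hNR.ne'
  have hL : HasFDerivAt (fun y => (1 + ∑ k ∈ Finset.Icc 1 (N-1), (c r y x / c r x y) ^ k)⁻¹)
      ((-((1 + ∑ k ∈ Finset.Icc 1 (N-1), (a / a) ^ k)^2)⁻¹) •
        (∑ k ∈ Finset.Icc 1 (N-1), ((k:ℝ) * (a/a) ^ (k-1)) • Dg)) x :=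
    (hasDerivAt_inv hFne).comp_hasFDerivAt_of_eq x hsum rfl
  -- RHS
  have hq : HasFDerivAt (fun y => c r x y / c r y x)
      (a • ((-(a^2)⁻¹) • U) + a⁻¹ • V) x := by
    simp only [div_eq_mul_inv]
    exact hV.mul hUinv
  have hqx : a / a ≠ 0 := by rw [hgx]; exact one_ne_zero
  have hR : HasFDerivAt (fun y => Real.log (c r x y / c r y x))
      ((a/a)⁻¹ • (a • ((-(a^2)⁻¹) • U) + a⁻¹ • V)) x := hq.log hqx
  rw [hL.fderiv, hR.fderiv]
  -- simplify sum of scalars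
  rw [hFx, hgx]
  simp only [one_pow, mul_one, inv_one, one_smul]
  rw [← Finset.sum_smul]
  have hS : (∑ k ∈ Finset.Icc 1 (N-1), (k:ℝ)) * 2 = N * ((N:ℝ) - 1) := by
    have h1 : Finset.Icc 1 (N-1) = Finset.range N \ {0} := by
      ext k; simp; omega
    have h2 : ∑ k ∈ Finset.Icc 1 (N-1), (k:ℝ) = ∑ k ∈ Finset.range N, (k:ℝ) := by
      rw [h1, Finset.sum_sdiff_eq_sub (by simp; omega)]
      simp
    rw [h2, ← Nat.cast_sum]
    rw [show (2:ℝ) = ((2:ℕ):ℝ) by norm_num, ← Nat.cast_mul, Finset.sum_range_id_mul_two]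
    push_cast [Nat.cast_sub hN]
    ring
  set S := ∑ k ∈ Finset.Icc 1 (N-1), (k:ℝ) with hSdef
  ext w
  simp only [hDg, ContinuousLinearMap.smul_apply, ContinuousLinearMap.add_apply, smul_eq_mul]
  have hS' : S = N * ((N:ℝ) - 1) / 2 := by
    field_simp at hS ⊢; linarith
  rw [hS']
  field_simp
  ring
end
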